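/- arXiv:1307.3969 — 3 statements merged into one kernel-verified Lean document; each statement's English description precedes it below -/
import Mathlib

section
/- Let m ≥ 2, 0 ≤ s ≤ m, let I, J ⊆ ℝ be open intervals, and let z : I → ℝ^{m+1} and w : J → ℝ^{m+1} be three times continuously differentiable curves. Define L(x,y) = (z(x)+w(y))·tanh((x+y)/√2) − (z'(x)+w'(y))/√2 and suppose that on I × J, with the bilinear form of index s+1 on ℝ^{m+1}: ⟨L, L⟩_{s+1} = −1, ⟨∂L/∂x, ∂L/∂x⟩_{s+1} = 0, and ⟨∂L/∂y, ∂L/∂y⟩_{s+1} = 0. Then the conditions (iii.2): √2·⟨z(x)+w(y), 2z'(x)−z'''(x)⟩_{s+1}·tanh((x+y)/√2) = ⟨z'(x)+w'(y), 2z'(x)−z'''(x)⟩_{s+1}, and (iii.3): √2·⟨z(x)+w(y), 2w'(y)−w'''(y)⟩_{s+1}·tanh((x+y)/√2) = ⟨z'(x)+w'(y), 2w'(y)−w'''(y)⟩_{s+1}, hold for all (x,y) ∈ I × J; moreover ⟨∂L/∂x, ∂L/∂y⟩_{s+1} = −sech²((x+y)/√2) on I × J. -/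
/-!
Write `T = tanh ((x + y) / √2)` and `S = 1 - T² = sech² ((x + y) / √2)`, so that
`∂T/∂x = ∂T/∂y = S / √2`. A direct computation gives `∂L_x/∂y = -S • L` and
`√2 • L_xx = (2 z' - z''') - 2T • L_x`. Differentiating `⟨L, L⟩ = -1` gives `⟨L_x, L⟩ = 0`;
differentiating this once more in `x` and using `⟨L_x, L_x⟩ = 0` gives `⟨2 z' - z''', L⟩ = 0`,
which, once `L` is expanded, is (iii.2). Exchanging the roles of `(z, x)` and `(w, y)` gives
(iii.3), and differentiating `⟨L_x, L⟩ = 0` in `y` gives `⟨L_x, L_y⟩ = S ⟨L, L⟩ = -S`.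
-/

noncomputable def pform (s n : ℕ) (u v : Fin n → ℝ) : ℝ :=
  ∑ i : Fin n, (if (i : ℕ) < s then -(u i * v i) else u i * v i)

noncomputable def pd1 {E : Type*} [NormedAddCommGroup E] [NormedSpace ℝ E]
    (L : ℝ → ℝ → E) (x y : ℝ) : E :=
  deriv (fun t => L t y) x

noncomputable def pd2 {E : Type*} [NormedAddCommGroup E] [NormedSpace ℝ E]
    (L : ℝ → ℝ → E) (x y : ℝ) : E :=
  deriv (fun t => L x t) y

noncomputable def sech (t : ℝ) : ℝ := 1 / Real.cosh t

open Real Filter Topology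

lemma pform_eq_sum (s n : ℕ) (u v : Fin n → ℝ) :
    pform s n u v = ∑ i : Fin n, (if (i : ℕ) < s then -1 else 1) * (u i * v i) :=
  Finset.sum_congr rfl fun i _ => by split <;> ring

lemma pform_comm (s n : ℕ) (u v : Fin n → ℝ) : pform s n u v = pform s n v u := by
  simp only [pform_eq_sum, mul_comm (u _)]

lemma isBilinearMap_pform (s n : ℕ) : IsBilinearMap ℝ (pform s n) where
  add_left u u' v := by
    simp only [pform_eq_sum, ← Finset.sum_add_distrib, Pi.add_apply]
    exact Finset.sum_congr rfl fun i _ => by ring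
  smul_left a u v := by
    simp only [pform_eq_sum, Pi.smul_apply, smul_eq_mul, Finset.mul_sum]
    exact Finset.sum_congr rfl fun i _ => by ring
  add_right u v v' := by
    simp only [pform_eq_sum, ← Finset.sum_add_distrib, Pi.add_apply]
    exact Finset.sum_congr rfl fun i _ => by ring
  smul_right a u v := by
    simp only [pform_eq_sum, Pi.smul_apply, smul_eq_mul, Finset.mul_sum]
    exact Finset.sum_congr rfl fun i _ => by ring

lemma hasDerivAt_tanh (t : ℝ) : HasDerivAt tanh (1 - tanh t ^ 2) t := by
  have hcosh := (cosh_pos t).ne'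
  have h := (hasDerivAt_sinh t).div (hasDerivAt_cosh t) hcosh
  rw [show sinh / cosh = tanh from funext fun u => (tanh_eq_sinh_div_cosh u).symm] at h
  refine h.congr_deriv ?_
  rw [tanh_eq_sinh_div_cosh]
  field_simp

lemma sech_sq (t : ℝ) : sech t ^ 2 = 1 - tanh t ^ 2 := by
  have hcosh := (cosh_pos t).ne'
  rw [sech, tanh_eq_sinh_div_cosh]
  field_simp
  linear_combination (cosh_sq_sub_sinh_sq t).symm

lemma hasDerivAt_tanh_div_sqrt_two (t : ℝ) :
    HasDerivAt (fun t => tanh (t / √2)) ((√2)⁻¹ * (1 - tanh (t / √2) ^ 2)) t := by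
  have hdiv : HasDerivAt (fun t : ℝ => t / √2) (√2)⁻¹ t := by
    simpa [one_div] using (hasDerivAt_id t).div_const √2
  exact ((hasDerivAt_tanh (t / √2)).comp t hdiv).congr_deriv (mul_comm _ _)

lemma sqrt_two_mul_inv_sqrt_two : √2 * (√2)⁻¹ = 1 := mul_inv_cancel₀ (by positivity)

lemma inv_sqrt_two_mul_self : (√2)⁻¹ * (√2)⁻¹ = 1 / 2 := by
  rw [← mul_inv, mul_self_sqrt zero_le_two, one_div]

lemma ContDiffOn.differentiableAt_and_deriv {E : Type*} [NormedAddCommGroup E] [NormedSpace ℝ E]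
    {f : ℝ → E} {s : Set ℝ} {x : ℝ} (hf : ContDiffOn ℝ 2 f s) (hs : IsOpen s) (hx : x ∈ s) :
    DifferentiableAt ℝ f x ∧ DifferentiableAt ℝ (deriv f) x :=
  ⟨(hf.differentiableOn (by norm_num)).differentiableAt (hs.mem_nhds hx),
    ((hf.deriv_of_isOpen hs (m := 1) (by norm_num)).differentiableOn one_ne_zero).differentiableAt
      (hs.mem_nhds hx)⟩

lemma ContinuousLinearMap.bilinear_add_eq_zero_of_eventually_const
    {E : Type*} [NormedAddCommGroup E] [NormedSpace ℝ E] (B : E →L[ℝ] E →L[ℝ] ℝ)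
    {u v : ℝ → E} {u' v' : E} {x c : ℝ} (hu : HasDerivAt u u' x) (hv : HasDerivAt v v' x)
    (hc : ∀ᶠ t in 𝓝 x, B (u t) (v t) = c) :
    B u' (v x) + B (u x) v' = 0 := by
  rw [add_comm]
  exact (B.hasDerivAt_of_bilinear (fun _ => hu) (fun _ => hv)).unique
    ((hasDerivAt_const x c).congr_of_eventuallyEq hc)

section LorentzSurface

variable {E : Type*} [NormedAddCommGroup E] [NormedSpace ℝ E]

noncomputable def lorentzL (z w : ℝ → E) (x y : ℝ) : E :=
  tanh ((x + y) / √2) • (z x + w y) - (√2)⁻¹ • (deriv z x + deriv w y)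

-- `∂/∂x` of `lorentzL z w`; by `lorentzL_swap`, `∂/∂y` at `(x, y)` is `lorentzLx w z y x`.
noncomputable def lorentzLx (z w : ℝ → E) (x y : ℝ) : E :=
  ((√2)⁻¹ * (1 - tanh ((x + y) / √2) ^ 2)) • (z x + w y) + tanh ((x + y) / √2) • deriv z x -
    (√2)⁻¹ • deriv (deriv z) x

lemma lorentzL_swap (z w : ℝ → E) (x y : ℝ) : lorentzL z w x y = lorentzL w z y x := by
  rw [lorentzL, lorentzL, add_comm x, add_comm (z x), add_comm (deriv z x)]

variable {z w : ℝ → E} {x y : ℝ}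

lemma hasDerivAt_tanh_left :
    HasDerivAt (fun x => tanh ((x + y) / √2)) ((√2)⁻¹ * (1 - tanh ((x + y) / √2) ^ 2)) x :=
  (hasDerivAt_tanh_div_sqrt_two (x + y)).comp_add_const x y

lemma hasDerivAt_tanh_right :
    HasDerivAt (fun y => tanh ((x + y) / √2)) ((√2)⁻¹ * (1 - tanh ((x + y) / √2) ^ 2)) y :=
  (hasDerivAt_tanh_div_sqrt_two (x + y)).comp_const_add x y

lemma hasDerivAt_lorentzL_left (hz : DifferentiableAt ℝ z x)
    (hz' : DifferentiableAt ℝ (deriv z) x) :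
    HasDerivAt (fun x => lorentzL z w x y) (lorentzLx z w x y) x := by
  refine ((hasDerivAt_tanh_left.smul (hz.hasDerivAt.add_const (w y))).sub
    ((hz'.hasDerivAt.add_const (deriv w y)).const_smul (√2)⁻¹)).congr_deriv ?_
  rw [lorentzLx]
  module

lemma hasDerivAt_lorentzL_right (hw : DifferentiableAt ℝ w y)
    (hw' : DifferentiableAt ℝ (deriv w) y) :
    HasDerivAt (fun y => lorentzL z w x y) (lorentzLx w z y x) y := by
  simp only [lorentzL_swap z w x]
  exact hasDerivAt_lorentzL_left hw hw'

lemma hasDerivAt_lorentzLx_left (hz : DifferentiableAt ℝ z x)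
    (hz' : DifferentiableAt ℝ (deriv z) x) (hz'' : DifferentiableAt ℝ (deriv (deriv z)) x) :
    HasDerivAt (fun x => lorentzLx z w x y)
      ((√2)⁻¹ • ((2 : ℝ) • deriv z x - deriv (deriv (deriv z)) x) -
        (√2 * tanh ((x + y) / √2)) • lorentzLx z w x y) x := by
  have hT := hasDerivAt_tanh_left (x := x) (y := y)
  have hS := ((hT.fun_pow 2).const_sub 1).const_mul (√2)⁻¹
  refine ((hS.smul (hz.hasDerivAt.add_const (w y))).add (hT.smul hz'.hasDerivAt) |>.sub
    (hz''.hasDerivAt.const_smul (√2)⁻¹)).congr_deriv ?_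
  set T := tanh ((x + y) / √2)
  have h1 := sqrt_two_mul_inv_sqrt_two
  have h2 := inv_sqrt_two_mul_self
  rw [lorentzLx]
  linear_combination (norm := module) (T * (1 - T ^ 2) * (h1 - 2 * h2)) • (z x + w y) +
    (T ^ 2 * (2 * (√2)⁻¹ * h1 - 2 * √2 * h2)) • deriv z x - (T * h1) • deriv (deriv z) x

lemma hasDerivAt_lorentzLx_right (hw : DifferentiableAt ℝ w y) :
    HasDerivAt (fun y => lorentzLx z w x y)
      ((-(1 - tanh ((x + y) / √2) ^ 2)) • lorentzL z w x y) y := by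
  have hT := hasDerivAt_tanh_right (x := x) (y := y)
  have hS := ((hT.fun_pow 2).const_sub 1).const_mul (√2)⁻¹
  refine ((hS.smul (hw.hasDerivAt.const_add (z x))).add (hT.smul_const (deriv z x)) |>.sub_const
    ((√2)⁻¹ • deriv (deriv z) x)).congr_deriv ?_
  set T := tanh ((x + y) / √2)
  rw [lorentzL]
  linear_combination (norm := module) (-2 * T * (1 - T ^ 2) * inv_sqrt_two_mul_self) • (z x + w y)

end LorentzSurface

section Consequences

variable {E : Type*} [NormedAddCommGroup E] [NormedSpace ℝ E] {B : E →L[ℝ] E →L[ℝ] ℝ}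
  {z w : ℝ → E} {x y c : ℝ}

lemma bilin_lorentzLx_lorentzL_eq_zero (hB : ∀ u v, B u v = B v u)
    (hz : DifferentiableAt ℝ z x) (hz' : DifferentiableAt ℝ (deriv z) x)
    (hLL : ∀ᶠ x' in 𝓝 x, B (lorentzL z w x' y) (lorentzL z w x' y) = c) :
    B (lorentzLx z w x y) (lorentzL z w x y) = 0 := by
  have hL := hasDerivAt_lorentzL_left (w := w) (y := y) hz hz'
  have h := B.bilinear_add_eq_zero_of_eventually_const hL hL hLL
  rw [hB (lorentzL z w x y)] at h
  linarith

theorem sqrt_two_mul_bilin_mul_tanh_eq (hB : ∀ u v, B u v = B v u) {I : Set ℝ}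
    (hI : IsOpen I) (hz : ContDiffOn ℝ 3 z I) (hx : x ∈ I)
    (hLL : ∀ x' ∈ I, B (lorentzL z w x' y) (lorentzL z w x' y) = c)
    (hxx : B (lorentzLx z w x y) (lorentzLx z w x y) = 0) :
    √2 * B (z x + w y) ((2 : ℝ) • deriv z x - deriv (deriv (deriv z)) x) * tanh ((x + y) / √2) =
      B (deriv z x + deriv w y) ((2 : ℝ) • deriv z x - deriv (deriv (deriv z)) x) := by
  have hz2 : ContDiffOn ℝ 2 z I := hz.of_le (by norm_num)
  have hz'2 : ContDiffOn ℝ 2 (deriv z) I := hz.deriv_of_isOpen hI (by norm_num)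
  obtain ⟨hz1, hz'1⟩ := hz2.differentiableAt_and_deriv hI hx
  obtain ⟨-, hz''1⟩ := hz'2.differentiableAt_and_deriv hI hx
  have hLxL : ∀ᶠ x' in 𝓝 x, B (lorentzLx z w x' y) (lorentzL z w x' y) = 0 := by
    filter_upwards [hI.mem_nhds hx] with x' hx'
    obtain ⟨h1, h2⟩ := hz2.differentiableAt_and_deriv hI hx'
    exact bilin_lorentzLx_lorentzL_eq_zero hB h1 h2
      (eventually_of_mem (hI.mem_nhds hx') hLL)
  have hLxx := hasDerivAt_lorentzLx_left (w := w) (y := y) hz1 hz'1 hz''1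
  set V := (2 : ℝ) • deriv z x - deriv (deriv (deriv z)) x
  clear_value V
  -- `V = 2 tanh • L_x + √2 • L_xx`, and both terms are orthogonal to `L`
  have hVL : B V (lorentzL z w x y) = 0 := by
    have h := B.bilinear_add_eq_zero_of_eventually_const hLxx
      (hasDerivAt_lorentzL_left hz1 hz'1) hLxL
    rw [B.map_sub₂, B.map_smul₂, B.map_smul₂, hxx, hLxL.self_of_nhds] at h
    simpa using h
  rw [hB, lorentzL, B.map_sub₂, B.map_smul₂, B.map_smul₂, smul_eq_mul, smul_eq_mul] at hVL
  linear_combination √2 * hVL + B (deriv z x + deriv w y) V * sqrt_two_mul_inv_sqrt_two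

theorem bilin_lorentzLx_lorentzLx_swap_eq (hB : ∀ u v, B u v = B v u) {I J : Set ℝ}
    (hI : IsOpen I) (hJ : IsOpen J) (hz : ContDiffOn ℝ 2 z I) (hw : ContDiffOn ℝ 2 w J)
    (hx : x ∈ I) (hy : y ∈ J)
    (hLL : ∀ x' ∈ I, ∀ y' ∈ J, B (lorentzL z w x' y') (lorentzL z w x' y') = c) :
    B (lorentzLx z w x y) (lorentzLx w z y x) = (1 - tanh ((x + y) / √2) ^ 2) * c := by
  obtain ⟨hw1, hw'1⟩ := hw.differentiableAt_and_deriv hJ hy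
  have hLxL : ∀ᶠ y' in 𝓝 y, B (lorentzLx z w x y') (lorentzL z w x y') = 0 := by
    filter_upwards [hJ.mem_nhds hy] with y' hy'
    obtain ⟨h1, h2⟩ := hz.differentiableAt_and_deriv hI hx
    exact bilin_lorentzLx_lorentzL_eq_zero hB h1 h2
      (eventually_of_mem (hI.mem_nhds hx) fun x' hx' => hLL x' hx' y' hy')
  have h := B.bilinear_add_eq_zero_of_eventually_const (hasDerivAt_lorentzLx_right hw1)
    (hasDerivAt_lorentzL_right hw1 hw'1) hLxL
  rw [B.map_smul₂, smul_eq_mul, hLL x hx y hy] at h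
  linarith

end Consequences

theorem stmt_16_general (m s : ℕ) (I J : Set ℝ)
    (hIo : IsOpen I) (hJo : IsOpen J)
    (z w : ℝ → Fin (m + 1) → ℝ) (hz : ContDiffOn ℝ 3 z I) (hw : ContDiffOn ℝ 3 w J)
    (L : ℝ → ℝ → Fin (m + 1) → ℝ)
    (hLdef : ∀ x y : ℝ,
      L x y = Real.tanh ((x + y) / Real.sqrt 2) • (z x + w y) -
        (Real.sqrt 2)⁻¹ • (deriv z x + deriv w y))
    (hLL : ∀ x ∈ I, ∀ y ∈ J, pform (s + 1) (m + 1) (L x y) (L x y) = -1)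
    (hxx : ∀ x ∈ I, ∀ y ∈ J, pform (s + 1) (m + 1) (pd1 L x y) (pd1 L x y) = 0)
    (hyy : ∀ x ∈ I, ∀ y ∈ J, pform (s + 1) (m + 1) (pd2 L x y) (pd2 L x y) = 0) :
    (∀ x ∈ I, ∀ y ∈ J,
      Real.sqrt 2 * pform (s + 1) (m + 1) (z x + w y)
          ((2 : ℝ) • deriv z x - deriv (deriv (deriv z)) x) *
        Real.tanh ((x + y) / Real.sqrt 2) =
      pform (s + 1) (m + 1) (deriv z x + deriv w y)
        ((2 : ℝ) • deriv z x - deriv (deriv (deriv z)) x)) ∧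
    (∀ x ∈ I, ∀ y ∈ J,
      Real.sqrt 2 * pform (s + 1) (m + 1) (z x + w y)
          ((2 : ℝ) • deriv w y - deriv (deriv (deriv w)) y) *
        Real.tanh ((x + y) / Real.sqrt 2) =
      pform (s + 1) (m + 1) (deriv z x + deriv w y)
        ((2 : ℝ) • deriv w y - deriv (deriv (deriv w)) y)) ∧
    (∀ x ∈ I, ∀ y ∈ J,
      pform (s + 1) (m + 1) (pd1 L x y) (pd2 L x y) =
        -(sech ((x + y) / Real.sqrt 2)) ^ 2) := by
  let B := (isBilinearMap_pform (s + 1) (m + 1)).toContinuousBilinearMap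
  have hB : ∀ u v, B u v = B v u := pform_comm (s + 1) (m + 1)
  obtain rfl : L = lorentzL z w := funext₂ hLdef
  have hz2 : ContDiffOn ℝ 2 z I := hz.of_le (by norm_num)
  have hw2 : ContDiffOn ℝ 2 w J := hw.of_le (by norm_num)
  have hpd1 : ∀ x ∈ I, ∀ y, pd1 (lorentzL z w) x y = lorentzLx z w x y := fun x hx y =>
    let ⟨h1, h2⟩ := hz2.differentiableAt_and_deriv hIo hx
    (hasDerivAt_lorentzL_left h1 h2).deriv
  have hpd2 : ∀ x, ∀ y ∈ J, pd2 (lorentzL z w) x y = lorentzLx w z y x := fun x y hy =>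
    let ⟨h1, h2⟩ := hw2.differentiableAt_and_deriv hJo hy
    (hasDerivAt_lorentzL_right h1 h2).deriv
  refine ⟨fun x hx y hy => ?_, fun x hx y hy => ?_, fun x hx y hy => ?_⟩
  · refine sqrt_two_mul_bilin_mul_tanh_eq (B := B) hB hIo hz hx (hLL · · y hy) ?_
    rw [← hpd1 x hx y]
    exact hxx x hx y hy
  · have h := sqrt_two_mul_bilin_mul_tanh_eq (B := B) (x := y) (y := x) hB hJo hw hy
      (fun y' hy' => by rw [← lorentzL_swap]; exact hLL x hx y' hy')
      (by rw [← hpd2 x y hy]; exact hyy x hx y hy)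
    rwa [add_comm (w y), add_comm y, add_comm (deriv w y)] at h
  · rw [hpd1 x hx y, hpd2 x y hy, sech_sq]
    exact (bilin_lorentzLx_lorentzLx_swap_eq (B := B) hB hIo hJo hz2 hw2 hx hy hLL).trans
      (mul_neg_one _)

theorem stmt_16 (m s : ℕ) (hm : 2 ≤ m) (hs : s ≤ m) (I J : Set ℝ)
    (hIo : IsOpen I) (hIc : I.OrdConnected) (hJo : IsOpen J) (hJc : J.OrdConnected)
    (z w : ℝ → Fin (m + 1) → ℝ) (hz : ContDiffOn ℝ 3 z I) (hw : ContDiffOn ℝ 3 w J)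
    (L : ℝ → ℝ → Fin (m + 1) → ℝ)
    (hLdef : ∀ x y : ℝ,
      L x y = Real.tanh ((x + y) / Real.sqrt 2) • (z x + w y) -
        (Real.sqrt 2)⁻¹ • (deriv z x + deriv w y))
    (hLL : ∀ x ∈ I, ∀ y ∈ J, pform (s + 1) (m + 1) (L x y) (L x y) = -1)
    (hxx : ∀ x ∈ I, ∀ y ∈ J, pform (s + 1) (m + 1) (pd1 L x y) (pd1 L x y) = 0)
    (hyy : ∀ x ∈ I, ∀ y ∈ J, pform (s + 1) (m + 1) (pd2 L x y) (pd2 L x y) = 0) :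
    (∀ x ∈ I, ∀ y ∈ J,
      Real.sqrt 2 * pform (s + 1) (m + 1) (z x + w y)
          ((2 : ℝ) • deriv z x - deriv (deriv (deriv z)) x) *
        Real.tanh ((x + y) / Real.sqrt 2) =
      pform (s + 1) (m + 1) (deriv z x + deriv w y)
        ((2 : ℝ) • deriv z x - deriv (deriv (deriv z)) x)) ∧
    (∀ x ∈ I, ∀ y ∈ J,
      Real.sqrt 2 * pform (s + 1) (m + 1) (z x + w y)
          ((2 : ℝ) • deriv w y - deriv (deriv (deriv w)) y) *
        Real.tanh ((x + y) / Real.sqrt 2) =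
      pform (s + 1) (m + 1) (deriv z x + deriv w y)
        ((2 : ℝ) • deriv w y - deriv (deriv (deriv w)) y)) ∧
    (∀ x ∈ I, ∀ y ∈ J,
      pform (s + 1) (m + 1) (pd1 L x y) (pd2 L x y) =
        -(sech ((x + y) / Real.sqrt 2)) ^ 2) :=
  stmt_16_general m s I J hIo hJo z w hz hw L hLdef hLL hxx hyy
end

section
/- Let a, p, q, r be real numbers with a > 0 and p > r > q > 0. Define the curve z : ℝ → ℝ^7 by z(x) = (a·cosh(px), (√(4r²+a²p²(p²−r²))/(q·√(r²−q²)))·cosh(qx), (√(4q²+a²p²(p²−q²))/(r·√(r²−q²)))·sinh(rx), a·sinh(px), (√(4r²+a²p²(p²−r²))/(q·√(r²−q²)))·sinh(qx), (√(4q²+a²p²(p²−q²))/(r·√(r²−q²)))·cosh(rx), √(4(q²+r²)+a²(p²−r²)(p²−q²))/(qr)). Then, with the bilinear form of index 3 on ℝ^7, for every x ∈ ℝ: ⟨z(x), z(x)⟩_3 = 0, ⟨z'(x), z'(x)⟩_3 = 4, ⟨z''(x), z''(x)⟩_3 = 0, and z'''(x) ≠ 0. (Hence z is a spacelike curve of constant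 speed 2 lying in the light cone of 𝔼^7_3 with lightlike acceleration and nonvanishing third derivative, so by Theorem 5.1(b) the map L(x,y) = z(x)/(x+y) − z'(x)/2 gives a minimal Lorentz surface of constant curvature one in S^6_3(1).) -/
/-!
Every coordinate of `z` is a multiple of `cosh` or `sinh`, and the coordinates come in pairs
`(κ cosh(kx), κ sinh(kx))` sitting in one negative and one positive slot of the form, so by
`cosh² − sinh² = 1` the quadratic form of `z` and of each of its derivatives is independent of `x`:
it is `±(c² − a² − b²) + d²` with the coefficients scaled by powers of `p, q, r`. The three
resulting identities between `a, b, c, d, p, q, r` are exactly what the radicands are chosen for.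
-/

open Real

lemma pform_three_seven (u : Fin 7 → ℝ) :
    pform 3 7 u u = -u 0 ^ 2 - u 1 ^ 2 - u 2 ^ 2 + u 3 ^ 2 + u 4 ^ 2 + u 5 ^ 2 + u 6 ^ 2 := by
  simp only [pform, Fin.sum_univ_seven]
  norm_num
  ring

/-- Differentiating swaps `f` and `g`, so `(f, g) = (cosh, sinh)` and `(sinh, cosh)` cover the
curve of the theorem and all its derivatives. -/
def hypCurve (f g : ℝ → ℝ) (a b c d p q r x : ℝ) : Fin 7 → ℝ :=
  ![a * f (p * x), b * f (q * x), c * g (r * x), a * g (p * x), b * g (q * x), c * f (r * x), d]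

section

variable {f g : ℝ → ℝ} {a b c d p q r : ℝ}

lemma hasDerivAt_hypCurve (hf : ∀ t, HasDerivAt f (g t) t) (hg : ∀ t, HasDerivAt g (f t) t)
    (x : ℝ) :
    HasDerivAt (hypCurve f g a b c d p q r)
      (hypCurve g f (a * p) (b * q) (c * r) 0 p q r x) x := by
  have scaled : ∀ {h h' : ℝ → ℝ}, (∀ t, HasDerivAt h (h' t) t) → ∀ κ k : ℝ,
      HasDerivAt (fun t => κ * h (k * t)) (κ * k * h' (k * x)) x := by
    intro h h' hh κ k
    have := ((hh (k * x)).comp x ((hasDerivAt_id x).const_mul k)).const_mul κ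
    simpa [mul_comm, mul_left_comm, mul_assoc] using this
  rw [hasDerivAt_pi]
  intro i
  fin_cases i
  exacts [scaled hf a p, scaled hf b q, scaled hg c r, scaled hg a p, scaled hg b q,
    scaled hf c r, hasDerivAt_const x d]

lemma deriv_hypCurve (hf : ∀ t, HasDerivAt f (g t) t) (hg : ∀ t, HasDerivAt g (f t) t) :
    deriv (hypCurve f g a b c d p q r) = hypCurve g f (a * p) (b * q) (c * r) 0 p q r :=
  funext fun x => (hasDerivAt_hypCurve hf hg x).deriv

lemma pform_hypCurve {ε : ℝ} (hfg : ∀ t, f t ^ 2 - g t ^ 2 = ε) (x : ℝ) :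
    pform 3 7 (hypCurve f g a b c d p q r x) (hypCurve f g a b c d p q r x) =
      ε * (c ^ 2 - a ^ 2 - b ^ 2) + d ^ 2 := by
  rw [pform_three_seven]
  simp only [hypCurve, Matrix.cons_val]
  linear_combination (-a ^ 2) * hfg (p * x) - b ^ 2 * hfg (q * x) + c ^ 2 * hfg (r * x)

end

lemma sq_sqrt_div_mul_sqrt {N T : ℝ} (k : ℝ) (hN : 0 ≤ N) (hT : 0 ≤ T) :
    (√N / (k * √T)) ^ 2 = N / (k ^ 2 * T) := by
  rw [div_pow, mul_pow, sq_sqrt hN, sq_sqrt hT]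

lemma coeff_identities {a b c d p q r : ℝ} (hq : q ≠ 0) (hr : r ≠ 0) (hqr : r ^ 2 - q ^ 2 ≠ 0)
    (hb : b ^ 2 = (4 * r ^ 2 + a ^ 2 * p ^ 2 * (p ^ 2 - r ^ 2)) / (q ^ 2 * (r ^ 2 - q ^ 2)))
    (hc : c ^ 2 = (4 * q ^ 2 + a ^ 2 * p ^ 2 * (p ^ 2 - q ^ 2)) / (r ^ 2 * (r ^ 2 - q ^ 2)))
    (hd : d ^ 2 = (4 * (q ^ 2 + r ^ 2) + a ^ 2 * (p ^ 2 - r ^ 2) * (p ^ 2 - q ^ 2)) /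
      (q * r) ^ 2) :
    c ^ 2 - a ^ 2 - b ^ 2 + d ^ 2 = 0 ∧
      (c * r) ^ 2 - (a * p) ^ 2 - (b * q) ^ 2 = -4 ∧
      (c * r ^ 2) ^ 2 - (a * p ^ 2) ^ 2 - (b * q ^ 2) ^ 2 = 0 := by
  simp only [mul_pow]
  rw [hb, hc, hd]
  refine ⟨?_, ?_, ?_⟩ <;> field_simp <;> ring

theorem stmt_17 (a p q r : ℝ) (ha : 0 < a) (hpr : r < p) (hrq : q < r) (hq : 0 < q)
    (z : ℝ → Fin 7 → ℝ)
    (hzdef : ∀ x : ℝ, z x =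
      ![a * Real.cosh (p * x),
        (Real.sqrt (4 * r ^ 2 + a ^ 2 * p ^ 2 * (p ^ 2 - r ^ 2)) /
          (q * Real.sqrt (r ^ 2 - q ^ 2))) * Real.cosh (q * x),
        (Real.sqrt (4 * q ^ 2 + a ^ 2 * p ^ 2 * (p ^ 2 - q ^ 2)) /
          (r * Real.sqrt (r ^ 2 - q ^ 2))) * Real.sinh (r * x),
        a * Real.sinh (p * x),
        (Real.sqrt (4 * r ^ 2 + a ^ 2 * p ^ 2 * (p ^ 2 - r ^ 2)) /
          (q * Real.sqrt (r ^ 2 - q ^ 2))) * Real.sinh (q * x),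
        (Real.sqrt (4 * q ^ 2 + a ^ 2 * p ^ 2 * (p ^ 2 - q ^ 2)) /
          (r * Real.sqrt (r ^ 2 - q ^ 2))) * Real.cosh (r * x),
        Real.sqrt (4 * (q ^ 2 + r ^ 2) + a ^ 2 * (p ^ 2 - r ^ 2) * (p ^ 2 - q ^ 2)) /
          (q * r)]) :
    ∀ x : ℝ,
      pform 3 7 (z x) (z x) = 0 ∧
      pform 3 7 (deriv z x) (deriv z x) = 4 ∧
      pform 3 7 (deriv (deriv z) x) (deriv (deriv z) x) = 0 ∧
      deriv (deriv (deriv z)) x ≠ 0 := by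
  intro x
  have hr : 0 < r := hq.trans hrq
  have hp : 0 < p := hr.trans hpr
  have hqr : 0 < r ^ 2 - q ^ 2 := by nlinarith
  have hpr2 : 0 ≤ p ^ 2 - r ^ 2 := by nlinarith
  have hpq2 : 0 ≤ p ^ 2 - q ^ 2 := by nlinarith
  set b := √(4 * r ^ 2 + a ^ 2 * p ^ 2 * (p ^ 2 - r ^ 2)) / (q * √(r ^ 2 - q ^ 2))
  set c := √(4 * q ^ 2 + a ^ 2 * p ^ 2 * (p ^ 2 - q ^ 2)) / (r * √(r ^ 2 - q ^ 2))
  set d := √(4 * (q ^ 2 + r ^ 2) + a ^ 2 * (p ^ 2 - r ^ 2) * (p ^ 2 - q ^ 2)) / (q * r)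
  obtain ⟨hz0, hz1, hz2⟩ := coeff_identities (b := b) (c := c) (d := d) hq.ne' hr.ne' hqr.ne'
    (sq_sqrt_div_mul_sqrt q (add_nonneg (by positivity) (mul_nonneg (by positivity) hpr2)) hqr.le)
    (sq_sqrt_div_mul_sqrt r (add_nonneg (by positivity) (mul_nonneg (by positivity) hpq2)) hqr.le)
    (by rw [div_pow, sq_sqrt (add_nonneg (by positivity)
      (mul_nonneg (mul_nonneg (sq_nonneg a) hpr2) hpq2))])
  have hz : z = hypCurve cosh sinh a b c d p q r := funext hzdef
  have hsc (t : ℝ) : sinh t ^ 2 - cosh t ^ 2 = -1 := by linarith [cosh_sq_sub_sinh_sq t]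
  simp only [hz, deriv_hypCurve hasDerivAt_cosh hasDerivAt_sinh,
    deriv_hypCurve hasDerivAt_sinh hasDerivAt_cosh, pform_hypCurve cosh_sq_sub_sinh_sq,
    pform_hypCurve hsc]
  refine ⟨by linear_combination hz0, by linear_combination -hz1, by linear_combination hz2,
    fun h => ?_⟩
  have h3 : a * p * p * p * cosh (p * x) = 0 := congrFun h 3
  exact (mul_pos (by positivity) (cosh_pos _)).ne' h3
end

section
/- Let a, b, p, q be positive real numbers satisfying p² < (4+a²)/(2+a²) < q² and b²p²q² > a²(q²−1)(1−p²) + 2(p²+q²−2). Define the curve z : ℝ → ℝ^8 by z(x) = (b, a·cosh(x), (√(q²(2+a²)−(4+a²))/(p·√(q²−p²)))·sinh(px), (√(4+a²−p²(2+a²))/(q·√(q²−p²)))·sinh(qx), a·sinh(x), (√(q²(2+a²)−(4+a²))/(p·√(q²−p²)))·cosh(px), (√(4+a²−p²(2+a²))/(q·√(q²−p²)))·cosh(qx), √(b²p²q²−a²(q²−1)(1−p²)−2(p²+q²−2))/(pq)). Then, with the bilinear form of index 4 on ℝ^8, for every x ∈ ℝ: ⟨z(x), z(x)⟩_4 = 0,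 ⟨z'(x), z'(x)⟩_4 = −2, ⟨z''(x), z''(x)⟩_4 = 4, and z'''(x) ≠ 2z'(x). (Hence z is a timelike curve of constant speed √2 lying in the light cone of 𝔼^8_4 with ⟨z'',z''⟩ = 4 and z''' ≠ 2z', so by Theorem 6.1(ii) the map L(x,y) = z(x)·tanh((x+y)/√2) − z'(x)/√2 gives a minimal Lorentz surface of constant curvature −1 in H^7_3(−1).) -/
open Real

def hyperbolicCurve (k₀ A C₁ C₂ k₇ p q : ℝ) (f g : ℝ → ℝ) (x : ℝ) : Fin 8 → ℝ :=
  ![k₀, A * f x, C₁ * g (p * x), C₂ * g (q * x), A * g x, C₁ * f (p * x), C₂ * f (q * x), k₇]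

section hyperbolicCurve

variable {f g : ℝ → ℝ}

theorem pform_hyperbolicCurve {ε : ℝ} (hfg : ∀ t, f t ^ 2 - g t ^ 2 = ε)
    (k₀ A C₁ C₂ k₇ p q x : ℝ) :
    pform 4 8 (hyperbolicCurve k₀ A C₁ C₂ k₇ p q f g x) (hyperbolicCurve k₀ A C₁ C₂ k₇ p q f g x)
      = k₇ ^ 2 - k₀ ^ 2 + ε * (C₁ ^ 2 + C₂ ^ 2 - A ^ 2) := by
  simp only [pform, hyperbolicCurve, Fin.sum_univ_eight, Fin.isValue, Fin.coe_ofNat_eq_mod,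
    Nat.zero_mod, Nat.ofNat_pos, ↓reduceIte, Matrix.cons_val_zero, Nat.one_mod, Nat.one_lt_ofNat,
    Matrix.cons_val_one, Nat.reduceMod, Nat.reduceLT, Matrix.cons_val, Nat.lt_add_one,
    lt_self_iff_false, Nat.mod_succ]
  linear_combination C₁ ^ 2 * hfg (p * x) + C₂ ^ 2 * hfg (q * x) - A ^ 2 * hfg x

theorem hasDerivAt_const_mul_comp_const_mul {h h' : ℝ → ℝ} (hh : ∀ t, HasDerivAt h (h' t) t)
    (u k x : ℝ) : HasDerivAt (fun x => u * h (k * x)) (u * k * h' (k * x)) x := by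
  have := ((hh (k * x)).comp x ((hasDerivAt_id x).const_mul k)).const_mul u
  simpa [mul_assoc, mul_comm k] using this

theorem hasDerivAt_hyperbolicCurve (hf : ∀ t, HasDerivAt f (g t) t)
    (hg : ∀ t, HasDerivAt g (f t) t) (k₀ A C₁ C₂ k₇ p q x : ℝ) :
    HasDerivAt (hyperbolicCurve k₀ A C₁ C₂ k₇ p q f g)
      (hyperbolicCurve 0 A (C₁ * p) (C₂ * q) 0 p q g f x) x := by
  rw [hasDerivAt_pi]
  intro i
  fin_cases i <;> simp only [hyperbolicCurve]
  · exact hasDerivAt_const x k₀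
  · simpa using hasDerivAt_const_mul_comp_const_mul hf A 1 x
  · exact hasDerivAt_const_mul_comp_const_mul hg C₁ p x
  · exact hasDerivAt_const_mul_comp_const_mul hg C₂ q x
  · simpa using hasDerivAt_const_mul_comp_const_mul hg A 1 x
  · exact hasDerivAt_const_mul_comp_const_mul hf C₁ p x
  · exact hasDerivAt_const_mul_comp_const_mul hf C₂ q x
  · exact hasDerivAt_const x k₇

theorem deriv_hyperbolicCurve (hf : ∀ t, HasDerivAt f (g t) t)
    (hg : ∀ t, HasDerivAt g (f t) t) (k₀ A C₁ C₂ k₇ p q : ℝ) :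
    deriv (hyperbolicCurve k₀ A C₁ C₂ k₇ p q f g)
      = hyperbolicCurve 0 A (C₁ * p) (C₂ * q) 0 p q g f :=
  funext fun x => (hasDerivAt_hyperbolicCurve hf hg k₀ A C₁ C₂ k₇ p q x).deriv

end hyperbolicCurve

theorem sq_sqrt_div_mul_sqrt_s18 {u w : ℝ} (hu : 0 ≤ u) (hw : 0 ≤ w) (v : ℝ) :
    (√u / (v * √w)) ^ 2 = u / (v ^ 2 * w) := by
  rw [div_pow, mul_pow, sq_sqrt hu, sq_sqrt hw]

noncomputable def amplitudeP (a p q : ℝ) : ℝ :=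
  √(q ^ 2 * (2 + a ^ 2) - (4 + a ^ 2)) / (p * √(q ^ 2 - p ^ 2))

noncomputable def amplitudeQ (a p q : ℝ) : ℝ :=
  √(4 + a ^ 2 - p ^ 2 * (2 + a ^ 2)) / (q * √(q ^ 2 - p ^ 2))

noncomputable def offset (a b p q : ℝ) : ℝ :=
  √(b ^ 2 * p ^ 2 * q ^ 2 - a ^ 2 * (q ^ 2 - 1) * (1 - p ^ 2) - 2 * (p ^ 2 + q ^ 2 - 2)) / (p * q)

section amplitudes

variable {a p q : ℝ}

theorem amplitude_radicands_pos (h1 : p ^ 2 < (4 + a ^ 2) / (2 + a ^ 2))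
    (h2 : (4 + a ^ 2) / (2 + a ^ 2) < q ^ 2) :
    0 < q ^ 2 * (2 + a ^ 2) - (4 + a ^ 2) ∧ 0 < 4 + a ^ 2 - p ^ 2 * (2 + a ^ 2) ∧
      0 < q ^ 2 - p ^ 2 := by
  have hS : 0 < 2 + a ^ 2 := by positivity
  have hE₁ := (div_lt_iff₀ hS).mp h2
  have hE₂ := (lt_div_iff₀ hS).mp h1
  refine ⟨by linarith, by linarith, ?_⟩
  nlinarith

theorem sq_amplitudeP (h1 : p ^ 2 < (4 + a ^ 2) / (2 + a ^ 2))
    (h2 : (4 + a ^ 2) / (2 + a ^ 2) < q ^ 2) :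
    amplitudeP a p q ^ 2 = (q ^ 2 * (2 + a ^ 2) - (4 + a ^ 2)) / (p ^ 2 * (q ^ 2 - p ^ 2)) :=
  have h := amplitude_radicands_pos h1 h2
  sq_sqrt_div_mul_sqrt_s18 h.1.le h.2.2.le p

theorem sq_amplitudeQ (h1 : p ^ 2 < (4 + a ^ 2) / (2 + a ^ 2))
    (h2 : (4 + a ^ 2) / (2 + a ^ 2) < q ^ 2) :
    amplitudeQ a p q ^ 2 = (4 + a ^ 2 - p ^ 2 * (2 + a ^ 2)) / (q ^ 2 * (q ^ 2 - p ^ 2)) :=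
  have h := amplitude_radicands_pos h1 h2
  sq_sqrt_div_mul_sqrt_s18 h.2.1.le h.2.2.le q

theorem amplitude_linear_system (hp : 0 < p) (hq : 0 < q)
    (h1 : p ^ 2 < (4 + a ^ 2) / (2 + a ^ 2)) (h2 : (4 + a ^ 2) / (2 + a ^ 2) < q ^ 2) :
    (amplitudeP a p q * p) ^ 2 + (amplitudeQ a p q * q) ^ 2 = a ^ 2 + 2 ∧
      (amplitudeP a p q * p * p) ^ 2 + (amplitudeQ a p q * q * q) ^ 2 = a ^ 2 + 4 := by
  have hD := (amplitude_radicands_pos h1 h2).2.2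
  simp only [mul_pow, sq_amplitudeP h1 h2, sq_amplitudeQ h1 h2]
  constructor <;> field_simp <;> ring

theorem sq_offset_add_sq_amplitudes {b : ℝ} (hp : 0 < p) (hq : 0 < q)
    (h1 : p ^ 2 < (4 + a ^ 2) / (2 + a ^ 2)) (h2 : (4 + a ^ 2) / (2 + a ^ 2) < q ^ 2)
    (h3 : b ^ 2 * p ^ 2 * q ^ 2 >
      a ^ 2 * (q ^ 2 - 1) * (1 - p ^ 2) + 2 * (p ^ 2 + q ^ 2 - 2)) :
    offset a b p q ^ 2 + amplitudeP a p q ^ 2 + amplitudeQ a p q ^ 2 = a ^ 2 + b ^ 2 := by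
  have hD := (amplitude_radicands_pos h1 h2).2.2
  rw [offset, div_pow, sq_sqrt (by linarith), sq_amplitudeP h1 h2, sq_amplitudeQ h1 h2]
  field_simp
  ring

end amplitudes

theorem stmt_18_general (a b p q : ℝ) (ha : 0 < a) (hp : 0 < p) (hq : 0 < q)
    (h1 : p ^ 2 < (4 + a ^ 2) / (2 + a ^ 2)) (h2 : (4 + a ^ 2) / (2 + a ^ 2) < q ^ 2)
    (h3 : b ^ 2 * p ^ 2 * q ^ 2 >
      a ^ 2 * (q ^ 2 - 1) * (1 - p ^ 2) + 2 * (p ^ 2 + q ^ 2 - 2))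
    (z : ℝ → Fin 8 → ℝ)
    (hzdef : ∀ x : ℝ, z x =
      ![b,
        a * Real.cosh x,
        (Real.sqrt (q ^ 2 * (2 + a ^ 2) - (4 + a ^ 2)) /
          (p * Real.sqrt (q ^ 2 - p ^ 2))) * Real.sinh (p * x),
        (Real.sqrt (4 + a ^ 2 - p ^ 2 * (2 + a ^ 2)) /
          (q * Real.sqrt (q ^ 2 - p ^ 2))) * Real.sinh (q * x),
        a * Real.sinh x,
        (Real.sqrt (q ^ 2 * (2 + a ^ 2) - (4 + a ^ 2)) /
          (p * Real.sqrt (q ^ 2 - p ^ 2))) * Real.cosh (p * x),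
        (Real.sqrt (4 + a ^ 2 - p ^ 2 * (2 + a ^ 2)) /
          (q * Real.sqrt (q ^ 2 - p ^ 2))) * Real.cosh (q * x),
        Real.sqrt (b ^ 2 * p ^ 2 * q ^ 2 - a ^ 2 * (q ^ 2 - 1) * (1 - p ^ 2) -
          2 * (p ^ 2 + q ^ 2 - 2)) / (p * q)]) :
    ∀ x : ℝ,
      pform 4 8 (z x) (z x) = 0 ∧
      pform 4 8 (deriv z x) (deriv z x) = -2 ∧
      pform 4 8 (deriv (deriv z) x) (deriv (deriv z) x) = 4 ∧
      deriv (deriv (deriv z)) x ≠ (2 : ℝ) • deriv z x := by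
  have hz : z = hyperbolicCurve b a (amplitudeP a p q) (amplitudeQ a p q) (offset a b p q) p q
      cosh sinh := funext hzdef
  set c₁ := amplitudeP a p q
  set c₂ := amplitudeQ a p q
  have hz₁ := hz ▸ deriv_hyperbolicCurve hasDerivAt_cosh hasDerivAt_sinh b a c₁ c₂ _ p q
  have hz₂ := hz₁ ▸
    deriv_hyperbolicCurve hasDerivAt_sinh hasDerivAt_cosh 0 a (c₁ * p) (c₂ * q) 0 p q
  have hz₃ := hz₂ ▸
    deriv_hyperbolicCurve hasDerivAt_cosh hasDerivAt_sinh 0 a (c₁ * p * p) (c₂ * q * q) 0 p q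
  have hcs : ∀ t, cosh t ^ 2 - sinh t ^ 2 = 1 := cosh_sq_sub_sinh_sq
  have hsc : ∀ t, sinh t ^ 2 - cosh t ^ 2 = -1 := fun t => by linarith [hcs t]
  obtain ⟨hspeed, hacc⟩ := amplitude_linear_system hp hq h1 h2
  intro x
  refine ⟨?_, ?_, ?_, ?_⟩
  · rw [hz, pform_hyperbolicCurve hcs]
    linear_combination sq_offset_add_sq_amplitudes hp hq h1 h2 h3
  · rw [hz₁, pform_hyperbolicCurve hsc]
    linear_combination -hspeed
  · rw [hz₂, pform_hyperbolicCurve hcs]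
    linear_combination hacc
  · intro h
    rw [hz₃, hz₁] at h
    have h₄ : a * cosh x = 2 * (a * cosh x) := by simpa [hyperbolicCurve] using congrFun h 4
    linarith [mul_pos ha (cosh_pos x)]

theorem stmt_18 (a b p q : ℝ) (ha : 0 < a) (hb : 0 < b) (hp : 0 < p) (hq : 0 < q)
    (h1 : p ^ 2 < (4 + a ^ 2) / (2 + a ^ 2)) (h2 : (4 + a ^ 2) / (2 + a ^ 2) < q ^ 2)
    (h3 : b ^ 2 * p ^ 2 * q ^ 2 >
      a ^ 2 * (q ^ 2 - 1) * (1 - p ^ 2) + 2 * (p ^ 2 + q ^ 2 - 2))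
    (z : ℝ → Fin 8 → ℝ)
    (hzdef : ∀ x : ℝ, z x =
      ![b,
        a * Real.cosh x,
        (Real.sqrt (q ^ 2 * (2 + a ^ 2) - (4 + a ^ 2)) /
          (p * Real.sqrt (q ^ 2 - p ^ 2))) * Real.sinh (p * x),
        (Real.sqrt (4 + a ^ 2 - p ^ 2 * (2 + a ^ 2)) /
          (q * Real.sqrt (q ^ 2 - p ^ 2))) * Real.sinh (q * x),
        a * Real.sinh x,
        (Real.sqrt (q ^ 2 * (2 + a ^ 2) - (4 + a ^ 2)) /
          (p * Real.sqrt (q ^ 2 - p ^ 2))) * Real.cosh (p * x),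
        (Real.sqrt (4 + a ^ 2 - p ^ 2 * (2 + a ^ 2)) /
          (q * Real.sqrt (q ^ 2 - p ^ 2))) * Real.cosh (q * x),
        Real.sqrt (b ^ 2 * p ^ 2 * q ^ 2 - a ^ 2 * (q ^ 2 - 1) * (1 - p ^ 2) -
          2 * (p ^ 2 + q ^ 2 - 2)) / (p * q)]) :
    ∀ x : ℝ,
      pform 4 8 (z x) (z x) = 0 ∧
      pform 4 8 (deriv z x) (deriv z x) = -2 ∧
      pform 4 8 (deriv (deriv z) x) (deriv (deriv z) x) = 4 ∧
      deriv (deriv (deriv z)) x ≠ (2 : ℝ) • deriv z x :=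
  stmt_18_general a b p q ha hp hq h1 h2 h3 z hzdef
end
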